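/- For S_β = [[0, cos β],[0, i sin β]] with β ∈ (0, π/2), the conformal range DW_BCK^ℝ(S_β) equals the elliptical disk {(x,z) : x²/((√2/2 · cos β)²) + (z + 1/2)²/(1/4) ≤ 1}. -/

import Mathlib

/-- The conformal range (real Davis–Wielandt shell) in the BCK model. -/
noncomputable def DWR (A : Matrix (Fin 2) (Fin 2) ℂ) : Set (ℝ × ℝ) :=
  {p : ℝ × ℝ | ∃ x : EuclideanSpace ℂ (Fin 2), x ≠ 0 ∧
      p = (2 * (inner ℂ x (Matrix.toEuclideanLin A x) : ℂ).re /
            (‖Matrix.toEuclideanLin A x‖ ^ 2 + ‖x‖ ^ 2),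
           (‖Matrix.toEuclideanLin A x‖ ^ 2 - ‖x‖ ^ 2) /
            (‖Matrix.toEuclideanLin A x‖ ^ 2 + ‖x‖ ^ 2))}

/-!
With `s = ‖x₀‖²`, `t = ‖x₁‖²` and `r = Re (conj x₀ * x₁)` one has `‖S_β x‖² = t` and
`Re ⟪x, S_β x⟫ = r cos β`, so the point of the conformal range at `x` is
`(2 r cos β, -s) / (s + 2 t)`. The triples `(s, t, r)` arising from pairs of complex numbers are
exactly those with `s, t ≥ 0` and `r² ≤ s t` (Cauchy–Schwarz, and an explicit pair for the
converse). Normalising `s + 2 t = 1`, the condition `r² ≤ s t` becomes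
`X² ≤ 2 cos² β · (-Z) (1 + Z)`, which is the equation of the ellipse.
-/

open ComplexConjugate

lemma Complex.sq_re_conj_mul_le (a b : ℂ) : (conj a * b).re ^ 2 ≤ ‖a‖ ^ 2 * ‖b‖ ^ 2 := by
  calc (conj a * b).re ^ 2 ≤ ‖conj a * b‖ ^ 2 := by
        rw [sq_le_sq, abs_norm]; exact Complex.abs_re_le_norm _
    _ = ‖a‖ ^ 2 * ‖b‖ ^ 2 := by rw [norm_mul, RCLike.norm_conj, mul_pow]

lemma Complex.exists_re_conj_mul_eq {s t r : ℝ} (hs : 0 ≤ s) (ht : 0 ≤ t) (hr : r ^ 2 ≤ s * t) :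
    ∃ a b : ℂ, ‖a‖ ^ 2 = s ∧ ‖b‖ ^ 2 = t ∧ (conj a * b).re = r := by
  rcases hs.eq_or_lt with rfl | hs
  · have hr0 : r = 0 := by nlinarith [sq_nonneg r]
    refine ⟨0, (√t : ℝ), by simp, ?_, by simp [hr0]⟩
    rw [Complex.norm_real, Real.norm_eq_abs, sq_abs, Real.sq_sqrt ht]
  · have hw : 0 ≤ t - r ^ 2 / s := by rw [sub_nonneg, div_le_iff₀ hs]; linarith
    have hu : (√s) ^ 2 = s := Real.sq_sqrt hs.le
    have hu0 : √s ≠ 0 := (Real.sqrt_pos.2 hs).ne'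
    refine ⟨(√s : ℝ), ⟨r / √s, √(t - r ^ 2 / s)⟩, ?_, ?_, ?_⟩
    · rw [Complex.norm_real, Real.norm_eq_abs, sq_abs, hu]
    · rw [Complex.sq_norm, Complex.normSq_mk, ← sq, ← sq, Real.sq_sqrt hw, div_pow, hu]
      ring
    · simp only [Complex.conj_ofReal, Complex.re_ofReal_mul]
      field_simp

lemma EuclideanSpace.norm_sq_fin_two {𝕜 : Type*} [RCLike 𝕜] (x : EuclideanSpace 𝕜 (Fin 2)) :
    ‖x‖ ^ 2 = ‖x 0‖ ^ 2 + ‖x 1‖ ^ 2 := by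
  rw [EuclideanSpace.norm_sq_eq, Fin.sum_univ_two]

noncomputable def Sbeta (β : ℝ) : Matrix (Fin 2) (Fin 2) ℂ :=
  !![0, (Real.cos β : ℂ); 0, Complex.I * (Real.sin β : ℂ)]

section Sbeta

variable (β : ℝ) (x : EuclideanSpace ℂ (Fin 2))

lemma toEuclideanLin_Sbeta_apply_zero :
    Matrix.toEuclideanLin (Sbeta β) x 0 = Real.cos β * x 1 := by
  simp [Sbeta, Matrix.toLpLin_apply, dotProduct, Fin.sum_univ_two]

lemma toEuclideanLin_Sbeta_apply_one :
    Matrix.toEuclideanLin (Sbeta β) x 1 = Complex.I * Real.sin β * x 1 := by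
  simp [Sbeta, Matrix.toLpLin_apply, dotProduct, Fin.sum_univ_two, mul_assoc]

lemma norm_sq_toEuclideanLin_Sbeta : ‖Matrix.toEuclideanLin (Sbeta β) x‖ ^ 2 = ‖x 1‖ ^ 2 := by
  rw [EuclideanSpace.norm_sq_fin_two, toEuclideanLin_Sbeta_apply_zero,
    toEuclideanLin_Sbeta_apply_one]
  simp only [norm_mul, Complex.norm_I, Complex.norm_real, Real.norm_eq_abs, one_mul, mul_pow,
    sq_abs]
  rw [← add_mul, Real.cos_sq_add_sin_sq, one_mul]

lemma re_inner_toEuclideanLin_Sbeta :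
    (inner ℂ x (Matrix.toEuclideanLin (Sbeta β) x)).re = Real.cos β * (conj (x 0) * x 1).re := by
  rw [PiLp.inner_apply, Fin.sum_univ_two, toEuclideanLin_Sbeta_apply_zero,
    toEuclideanLin_Sbeta_apply_one]
  simp only [RCLike.inner_apply, Complex.add_re, Complex.mul_re, Complex.conj_re, Complex.conj_im,
    Complex.mul_im, Complex.ofReal_re, Complex.ofReal_im, Complex.I_re, Complex.I_im]
  ring

end Sbeta

noncomputable def gramPoint (c s t r : ℝ) : ℝ × ℝ := (2 * c * r / (s + 2 * t), -s / (s + 2 * t))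

lemma mem_DWR_Sbeta_iff (β : ℝ) (p : ℝ × ℝ) :
    p ∈ DWR (Sbeta β) ↔ ∃ s t r : ℝ, 0 ≤ s ∧ 0 ≤ t ∧ 0 < s + t ∧ r ^ 2 ≤ s * t ∧
      p = gramPoint (Real.cos β) s t r := by
  constructor
  · rintro ⟨x, hx, rfl⟩
    refine ⟨‖x 0‖ ^ 2, ‖x 1‖ ^ 2, (conj (x 0) * x 1).re, by positivity, by positivity, ?_,
      Complex.sq_re_conj_mul_le _ _, ?_⟩
    · rw [← EuclideanSpace.norm_sq_fin_two]; positivity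
    · rw [norm_sq_toEuclideanLin_Sbeta, re_inner_toEuclideanLin_Sbeta,
        EuclideanSpace.norm_sq_fin_two, gramPoint]
      congr 1 <;> ring
  · rintro ⟨s, t, r, hs, ht, hst, hr, rfl⟩
    obtain ⟨a, b, ha, hb, hab⟩ := Complex.exists_re_conj_mul_eq hs ht hr
    have hx : ‖!₂[a, b]‖ ^ 2 = s + t := by
      rw [EuclideanSpace.norm_sq_fin_two]; simp [ha, hb]
    refine ⟨!₂[a, b], ?_, ?_⟩
    · intro h
      rw [h, norm_zero] at hx
      linarith
    · rw [norm_sq_toEuclideanLin_Sbeta, re_inner_toEuclideanLin_Sbeta, hx, gramPoint]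
      simp only [Matrix.cons_val_zero, Matrix.cons_val_one, hb, hab]
      congr 1 <;> ring

lemma exists_gramPoint_eq_iff {c : ℝ} (hc : c ≠ 0) (p : ℝ × ℝ) :
    (∃ s t r : ℝ, 0 ≤ s ∧ 0 ≤ t ∧ 0 < s + t ∧ r ^ 2 ≤ s * t ∧ p = gramPoint c s t r) ↔
      p.1 ^ 2 ≤ 2 * c ^ 2 * (-p.2 * (1 + p.2)) := by
  constructor
  · rintro ⟨s, t, r, hs, ht, hst, hr, rfl⟩
    have hd : 0 < s + 2 * t := by linarith
    simp only [gramPoint]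
    rw [div_pow, div_le_iff₀ (by positivity)]
    field_simp
    linarith [mul_le_mul_of_nonneg_left hr (sq_nonneg c)]
  · obtain ⟨X, Z⟩ := p
    rintro (h : X ^ 2 ≤ 2 * c ^ 2 * (-Z * (1 + Z)))
    have hZ : 0 ≤ -Z * (1 + Z) :=
      nonneg_of_mul_nonneg_right (by nlinarith [sq_nonneg X]) (by positivity : 0 < 2 * c ^ 2)
    have hZ₀ : Z ≤ 0 := by nlinarith
    have hZ₁ : -1 ≤ Z := by nlinarith
    -- `gramPoint c` is invariant under scaling `(s, t, r)`; take the preimage with `s + 2 t = 1`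
    refine ⟨-Z, (1 + Z) / 2, X / (2 * c), by linarith, by linarith, by linarith, ?_, ?_⟩
    · rw [div_pow, div_le_iff₀ (by positivity)]
      linarith
    · simp only [gramPoint, Prod.mk.injEq]
      constructor <;> field_simp <;> ring

lemma mem_ellipse_iff {c : ℝ} (hc : c ≠ 0) (p : ℝ × ℝ) :
    p.1 ^ 2 / (Real.sqrt 2 / 2 * c) ^ 2 + (p.2 + 1 / 2) ^ 2 / (1 / 4) ≤ 1 ↔
      p.1 ^ 2 ≤ 2 * c ^ 2 * (-p.2 * (1 + p.2)) := by
  have hsq : (Real.sqrt 2 / 2 * c) ^ 2 = c ^ 2 / 2 := by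
    rw [mul_pow, div_pow, Real.sq_sqrt zero_le_two]; ring
  rw [hsq, ← sub_nonneg, ← sub_nonneg (b := p.1 ^ 2)]
  have : 1 - (p.1 ^ 2 / (c ^ 2 / 2) + (p.2 + 1 / 2) ^ 2 / (1 / 4))
      = (2 * c ^ 2 * (-p.2 * (1 + p.2)) - p.1 ^ 2) * (2 / c ^ 2) := by
    field_simp; ring
  rw [this, mul_nonneg_iff_of_pos_right (by positivity)]

theorem DWR_Sbeta (β : ℝ) (hβ : β ∈ Set.Ioo 0 (Real.pi / 2)) :
    DWR !![(0 : ℂ), (Real.cos β : ℂ); 0, Complex.I * (Real.sin β : ℂ)] =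
      {p : ℝ × ℝ |
        p.1 ^ 2 / ((Real.sqrt 2 / 2 * Real.cos β) ^ 2)
          + (p.2 + 1 / 2) ^ 2 / (1 / 4) ≤ 1} := by
  have hc : Real.cos β ≠ 0 :=
    (Real.cos_pos_of_mem_Ioo ⟨by linarith [hβ.1, Real.pi_pos], hβ.2⟩).ne'
  ext p
  change p ∈ DWR (Sbeta β) ↔ _
  rw [mem_DWR_Sbeta_iff, exists_gramPoint_eq_iff hc, Set.mem_ofPred_eq, mem_ellipse_iff hc]
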